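/- For any real number ε with 0 < ε < 1 − 1/e, there exist a constant C > 0 and a real number Λ with 0 < Λ < 1 such that for all positive integers n and ℓ with ℓ ≤ (1 − 1/e − ε)·n, one has n^{−n}·∑_{j=1}^{ℓ} a(n,j) ≤ C·n^{3/2}·Λ^n. -/

import Mathlib

/-!
`surjCount n j = Δʲ xⁿ |ₓ₌₀ = j! S(n,j)`, so `a n j = C(n,j) · surjCount n j`; it is nonnegative
because `Δ xⁿ = ∑_{i<n} C(n,i) xⁱ` has nonnegative coefficients. Newton's forward-difference
formula `mⁿ = ∑ⱼ C(m,j) surjCount n j` turns the weighted sum `∑ⱼ a n j (1+u)^(n-j)` into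
`∑ₖ C(n,k) uᵏ (n-k)ⁿ`, which is at most `nⁿ (1 + u/e)ⁿ` since `(1 - k/n)ⁿ ≤ e^(-k)`.
For `j ≤ ℓ` we have `n - j ≥ s n` with `s = 1/e + ε`, hence `n⁻ⁿ ∑_{j ≤ ℓ} a n j ≤ Λⁿ` with
`Λ = (1 + u/e) / (1+u)^s`. Taking `u = ε`, `Λ < 1` follows from `log (1+ε) ≥ 2ε/(ε+2)`.
-/

noncomputable def stirling2 (n j : ℕ) : ℝ :=
  (1 / (Nat.factorial j : ℝ)) *
    ∑ i ∈ Finset.range (j + 1), (-1 : ℝ) ^ i * (Nat.choose j i : ℝ) * ((j - i : ℕ) : ℝ) ^ n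

noncomputable def a (n j : ℕ) : ℝ :=
  (Nat.choose n j : ℝ) * (Nat.factorial j : ℝ) * stirling2 n j

open Finset fwdDiff Real

noncomputable def surjCount (n j : ℕ) : ℝ := Δ_[1] ^[j] (fun x : ℕ => (x : ℝ) ^ n) 0

lemma fwdDiff_pow_eq_sum (n : ℕ) :
    Δ_[1] (fun x : ℕ => (x : ℝ) ^ n) =
      ∑ i ∈ range n, (n.choose i : ℝ) • fun x : ℕ => (x : ℝ) ^ i := by
  ext x
  simp only [fwdDiff, Nat.cast_add, Nat.cast_one, add_pow, one_pow, mul_one, sum_range_succ,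
    Nat.choose_self, add_sub_cancel_right, Finset.sum_apply, Pi.smul_apply, smul_eq_mul]
  exact sum_congr rfl fun i _ => mul_comm _ _

lemma fwdDiff_iter_pow_nonneg (j n x : ℕ) : 0 ≤ Δ_[1] ^[j] (fun x : ℕ => (x : ℝ) ^ n) x := by
  induction j generalizing n with
  | zero => simp only [Function.iterate_zero_apply]; positivity
  | succ j ih =>
    rw [Function.iterate_succ_apply, fwdDiff_pow_eq_sum, fwdDiff_iter_finsetSum, Finset.sum_apply]
    exact sum_nonneg fun i _ => by
      rw [fwdDiff_iter_const_smul, Pi.smul_apply]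
      exact smul_nonneg (by positivity) (ih i)

lemma surjCount_nonneg (n j : ℕ) : 0 ≤ surjCount n j :=
  fwdDiff_iter_pow_nonneg j n 0

lemma a_eq_choose_mul_surjCount (n j : ℕ) : a n j = n.choose j * surjCount n j := by
  rw [a, stirling2, surjCount, fwdDiff_iter_eq_sum_shift, ← sum_range_reflect, one_div, mul_assoc,
    mul_inv_cancel_left₀ (by positivity)]
  congr 1
  refine sum_congr rfl fun k hk => ?_
  have hkj : k ≤ j := Nat.lt_succ_iff.1 (mem_range.1 hk)
  simp [Nat.sub_sub_self hkj, Nat.choose_symm hkj, zsmul_eq_mul]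

lemma a_nonneg (n j : ℕ) : 0 ≤ a n j := by
  rw [a_eq_choose_mul_surjCount]
  exact mul_nonneg (Nat.cast_nonneg _) (surjCount_nonneg n j)

lemma pow_eq_sum_choose_mul_surjCount (m n : ℕ) :
    (m : ℝ) ^ n = ∑ j ∈ range (m + 1), m.choose j * surjCount n j := by
  simpa [surjCount] using shift_eq_sum_fwdDiff_iter 1 (fun x : ℕ => (x : ℝ) ^ n) m 0

lemma Nat.choose_mul_choose_sub_comm (n j k : ℕ) :
    n.choose k * (n - k).choose j = n.choose j * (n - j).choose k := by
  have hk := Nat.choose_mul (n := n) (Nat.le_add_left k j)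
  have hj := Nat.choose_mul (n := n) (Nat.le_add_right j k)
  rw [Nat.add_sub_cancel] at hk
  rw [Nat.add_sub_cancel_left] at hj
  rw [← hk, ← hj, Nat.choose_symm_add]

lemma sum_choose_mul_pow_mul_sum_choose {R : Type*} [CommSemiring R] (D : ℕ → R) (u : R)
    (n : ℕ) :
    ∑ k ∈ range (n + 1), n.choose k * u ^ k * ∑ j ∈ range (n - k + 1), (n - k).choose j * D j =
      ∑ j ∈ range (n + 1), n.choose j * D j * (1 + u) ^ (n - j) := by
  simp only [mul_sum]
  rw [sum_comm' (t' := range (n + 1)) (s' := fun j => range (n - j + 1))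
    (fun k j => by simp only [mem_range]; omega)]
  refine sum_congr rfl fun j _ => ?_
  rw [add_comm (1 : R) u, add_pow, mul_sum]
  refine sum_congr rfl fun k _ => ?_
  have := congrArg (Nat.cast : ℕ → R) (Nat.choose_mul_choose_sub_comm n j k)
  push_cast at this
  rw [one_pow, mul_one]
  calc (n.choose k : R) * u ^ k * ((n - k).choose j * D j)
      = (n.choose k * (n - k).choose j : R) * (u ^ k * D j) := by ring
    _ = _ := by rw [this]; ring

lemma sum_choose_mul_surjCount_mul_pow (n : ℕ) (u : ℝ) :
    ∑ j ∈ range (n + 1), n.choose j * surjCount n j * (1 + u) ^ (n - j) =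
      ∑ k ∈ range (n + 1), n.choose k * u ^ k * ((n - k : ℕ) : ℝ) ^ n := by
  simp only [pow_eq_sum_choose_mul_surjCount (n - _) n]
  exact (sum_choose_mul_pow_mul_sum_choose _ u n).symm

lemma sub_pow_le_pow_div_exp_pow {n k : ℕ} (hk : k ≤ n) :
    ((n - k : ℕ) : ℝ) ^ n ≤ n ^ n / exp 1 ^ k := by
  have h : ((n - k : ℕ) : ℝ) ^ n = n ^ n * (1 - k / n) ^ n := by
    rcases n.eq_zero_or_pos with rfl | hn
    · simp
    · rw [← mul_pow, mul_one_sub, mul_div_cancel₀ _ (by positivity), Nat.cast_sub hk]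
  rw [h, ← exp_nat_mul, mul_one, div_eq_mul_inv (_ ^ n), ← exp_neg]
  gcongr
  exact one_sub_div_pow_le_exp_neg (by exact_mod_cast hk)

lemma sum_Icc_a_mul_pow_le {n ℓ : ℕ} (hℓ : ℓ ≤ n) {u : ℝ} (hu : 0 ≤ u) :
    (∑ j ∈ Icc 1 ℓ, a n j) * (1 + u) ^ (n - ℓ) ≤ n ^ n * (1 + u / exp 1) ^ n := by
  have hD (j : ℕ) : (0 : ℝ) ≤ n.choose j * surjCount n j :=
    mul_nonneg (Nat.cast_nonneg _) (surjCount_nonneg n j)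
  calc (∑ j ∈ Icc 1 ℓ, a n j) * (1 + u) ^ (n - ℓ)
      ≤ ∑ j ∈ Icc 1 ℓ, n.choose j * surjCount n j * (1 + u) ^ (n - j) := by
        rw [sum_mul]
        refine sum_le_sum fun j hj => ?_
        have := (mem_Icc.1 hj).2
        rw [a_eq_choose_mul_surjCount]
        gcongr
        · exact hD j
        · linarith
    _ ≤ ∑ j ∈ range (n + 1), n.choose j * surjCount n j * (1 + u) ^ (n - j) :=
        sum_le_sum_of_subset_of_nonneg
          (fun j hj => mem_range.2 (by have := (mem_Icc.1 hj).2; omega))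
          (fun j _ _ => mul_nonneg (hD j) (by positivity))
    _ = ∑ k ∈ range (n + 1), n.choose k * u ^ k * ((n - k : ℕ) : ℝ) ^ n :=
        sum_choose_mul_surjCount_mul_pow n u
    _ ≤ ∑ k ∈ range (n + 1), n.choose k * u ^ k * (n ^ n / exp 1 ^ k) :=
        sum_le_sum fun k hk => by
          gcongr
          exact sub_pow_le_pow_div_exp_pow (Nat.lt_succ_iff.1 (mem_range.1 hk))
    _ = n ^ n * (1 + u / exp 1) ^ n := by
        rw [add_comm 1, add_pow, mul_sum]
        refine sum_congr rfl fun k _ => ?_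
        rw [div_pow, one_pow, mul_one]
        ring

lemma one_add_div_exp_lt_rpow {ε : ℝ} (hε : 0 < ε) :
    1 + ε / exp 1 < (1 + ε) ^ (1 / exp 1 + ε) := by
  have he := exp_pos 1
  have he2 : 1 / 2 < exp 1 := by linarith [add_one_le_exp 1]
  have hlog : ε / exp 1 < (1 / exp 1 + ε) * log (1 + ε) :=
    calc ε / exp 1 < (1 / exp 1 + ε) * (2 * ε / (ε + 2)) := by
          rw [div_lt_iff₀ he]; field_simp; nlinarith
      _ ≤ _ := by gcongr; exact le_log_one_add_of_nonneg hε.le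
  calc 1 + ε / exp 1 ≤ exp (ε / exp 1) := by linarith [add_one_le_exp (ε / exp 1)]
    _ < exp ((1 / exp 1 + ε) * log (1 + ε)) := exp_lt_exp.2 hlog
    _ = _ := by rw [rpow_def_of_pos (by linarith), mul_comm]

theorem stmt_1 (ε : ℝ) (hε0 : 0 < ε) :
    ∃ C Λ : ℝ, 0 < C ∧ 0 < Λ ∧ Λ < 1 ∧
      ∀ n ℓ : ℕ, 0 < n → 0 < ℓ → (ℓ : ℝ) ≤ (1 - 1 / Real.exp 1 - ε) * n →
        (n : ℝ) ^ (-(n : ℝ)) * ∑ j ∈ Finset.Icc 1 ℓ, a n j ≤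
          C * (n : ℝ) ^ ((3 : ℝ) / 2) * Λ ^ n := by
  set s := 1 / exp 1 + ε
  have hq : 0 < (1 + ε) ^ s := by positivity
  refine ⟨1, (1 + ε / exp 1) / (1 + ε) ^ s, one_pos, by positivity,
    (div_lt_one hq).2 (one_add_div_exp_lt_rpow hε0), fun n ℓ hn _ hℓ => ?_⟩
  have hsn : 0 ≤ s * n := by positivity
  have hℓn : ℓ ≤ n := by
    have : (ℓ : ℝ) ≤ n := hℓ.trans (by linarith)
    exact_mod_cast this
  have hpow : ((1 + ε) ^ s) ^ n ≤ (1 + ε) ^ (n - ℓ) := by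
    rw [← rpow_natCast, ← rpow_mul (by positivity), ← rpow_natCast]
    exact rpow_le_rpow_of_exponent_le (by linarith) (by push_cast [hℓn]; linarith)
  have hbound : ∑ j ∈ Icc 1 ℓ, a n j ≤ n ^ n * ((1 + ε / exp 1) / (1 + ε) ^ s) ^ n := by
    rw [div_pow, mul_div_assoc', le_div_iff₀ (by positivity)]
    exact (mul_le_mul_of_nonneg_left hpow (sum_nonneg fun j _ => a_nonneg n j)).trans
      (sum_Icc_a_mul_pow_le hℓn hε0.le)
  rw [rpow_neg (Nat.cast_nonneg n), rpow_natCast, one_mul, inv_mul_le_iff₀ (by positivity)]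
  refine hbound.trans (mul_le_mul_of_nonneg_left (le_mul_of_one_le_left (by positivity) ?_)
    (by positivity))
  exact one_le_rpow (by exact_mod_cast hn) (by norm_num)
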